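/- Let ħ > 0 and m > 0 be constants, and let ρ, φ, V : ℝ × ℝ → ℝ be such that ρ(x,t) > 0 everywhere and ρ and φ are twice continuously differentiable. Suppose the continuity equation ∂_t ρ = −(ħ/m)·(∂_x ρ · ∂_x φ + ρ · ∂_x² φ) and the phase equation ħ·∂_t φ + (ħ²/(2m))·(∂_x φ)² + V − (ħ²/(2m))·(∂_x² √ρ)/√ρ = 0 hold at every (x,t). Then Ψ(x,t) = √(ρ(x,t)) · exp(i·φ(x,t)) satisfies the Schrödinger equation i·ħ·∂_t Ψ(x,t) = −(ħ²/(2m))·∂_x² Ψ(x,t) + V(x,t)·Ψ(x,t) for all (x,t). -/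

import Mathlib

/-!
Madelung's substitution. Writing `Ψ = R e^{iφ}` with the amplitude `R = √ρ`, one has
`∂_t Ψ = (R_t + i φ_t R) e^{iφ}` and
`∂_x² Ψ = (R_xx − R φ_x² + i (2 R_x φ_x + R φ_xx)) e^{iφ}`.
After dividing out `e^{iφ}`, the imaginary part of the Schrödinger equation is the continuity
equation divided by `2R` (as `ρ_t = 2 R R_t`, `ρ_x = 2 R R_x`), and its real part is `R` times the
phase equation.
-/

open Complex

theorem hasDerivAt_mul_cexp_I_mul {A : ℝ → ℂ} {θ : ℝ → ℝ} {A' : ℂ} {θ' t : ℝ}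
    (hA : HasDerivAt A A' t) (hθ : HasDerivAt θ θ' t) :
    HasDerivAt (fun s => A s * cexp (I * (θ s : ℂ)))
      ((A' + I * θ' * A t) * cexp (I * (θ t : ℂ))) t :=
  (hA.fun_mul (hθ.ofReal_comp.const_mul I).cexp).congr_deriv (by ring)

theorem deriv_ofReal_mul_cexp_I_mul {R θ : ℝ → ℝ} {t : ℝ}
    (hR : DifferentiableAt ℝ R t) (hθ : DifferentiableAt ℝ θ t) :
    deriv (fun s => (R s : ℂ) * cexp (I * (θ s : ℂ))) t
      = (((deriv R t : ℝ) : ℂ) + I * deriv θ t * R t) * cexp (I * (θ t : ℂ)) :=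
  (hasDerivAt_mul_cexp_I_mul hR.hasDerivAt.ofReal_comp hθ.hasDerivAt).deriv

theorem deriv_deriv_ofReal_mul_cexp_I_mul {R θ : ℝ → ℝ} {x : ℝ}
    (hR : Differentiable ℝ R) (hθ : Differentiable ℝ θ)
    (hR' : DifferentiableAt ℝ (deriv R) x) (hθ' : DifferentiableAt ℝ (deriv θ) x) :
    deriv (deriv fun y => (R y : ℂ) * cexp (I * (θ y : ℂ))) x
      = (((deriv (deriv R) x : ℝ) : ℂ) - R x * deriv θ x ^ 2
          + I * (2 * deriv R x * deriv θ x + R x * deriv (deriv θ) x))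
        * cexp (I * (θ x : ℂ)) := by
  have hfirst : deriv (fun y => (R y : ℂ) * cexp (I * (θ y : ℂ)))
      = fun y => (((deriv R y : ℝ) : ℂ) + I * deriv θ y * R y) * cexp (I * (θ y : ℂ)) :=
    funext fun y => deriv_ofReal_mul_cexp_I_mul (hR y) (hθ y)
  have hamp : HasDerivAt (fun y => ((deriv R y : ℝ) : ℂ) + I * deriv θ y * R y)
      (((deriv (deriv R) x : ℝ) : ℂ) + I * deriv (deriv θ) x * R x
        + I * deriv θ x * deriv R x) x :=
    (hR'.hasDerivAt.ofReal_comp.add ((hθ'.hasDerivAt.ofReal_comp.const_mul I).fun_mul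
      (hR x).hasDerivAt.ofReal_comp)).congr_deriv (by ring)
  rw [hfirst, (hasDerivAt_mul_cexp_I_mul hamp (hθ x).hasDerivAt).deriv]
  linear_combination ((R x * deriv θ x ^ 2 : ℂ) * cexp (I * (θ x : ℂ))) * I_sq

theorem deriv_eq_two_mul_sqrt_mul_deriv_sqrt {f : ℝ → ℝ} {x : ℝ}
    (hf : DifferentiableAt ℝ f x) (hfx : 0 < f x) :
    deriv f x = 2 * √(f x) * deriv (fun y => √(f y)) x := by
  rw [(hf.hasDerivAt.sqrt hfx.ne').deriv]
  field_simp [(Real.sqrt_pos.mpr hfx).ne']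

theorem schrodinger_of_madelung {ħ m R Rt Rx Rxx θt θx θxx V : ℝ} (E : ℂ)
    (hcont : ħ * Rt + ħ ^ 2 / (2 * m) * (2 * Rx * θx + R * θxx) = 0)
    (hphase : ħ * R * θt + ħ ^ 2 / (2 * m) * (R * θx ^ 2 - Rxx) + V * R = 0) :
    I * ħ * ((Rt + I * θt * R) * E)
      = -(ħ ^ 2 / (2 * m)) * ((Rxx - R * θx ^ 2 + I * (2 * Rx * θx + R * θxx)) * E)
        + V * (R * E) := by
  have hcont' := congrArg (fun r : ℝ => (r : ℂ)) hcont
  have hphase' := congrArg (fun r : ℝ => (r : ℂ)) hphase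
  push_cast at hcont' hphase'
  linear_combination (I * E) * hcont' - E * hphase' + (ħ * θt * R * E) * I_sq

theorem eqd_schrodinger_equation_general
    (hbar m : ℝ)
    (ρ φ V : ℝ → ℝ → ℝ)
    (hρpos : ∀ x t, 0 < ρ x t)
    (hρ : ContDiff ℝ 2 (Function.uncurry ρ))
    (hφ : ContDiff ℝ 2 (Function.uncurry φ))
    (hFP : ∀ x t, deriv (fun s => ρ x s) t
        = -(hbar / m) * (deriv (fun y => ρ y t) x * deriv (fun y => φ y t) x
            + ρ x t * deriv (deriv (fun y => φ y t)) x))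
    (hphase : ∀ x t, hbar * deriv (fun s => φ x s) t
        + (hbar ^ 2 / (2 * m)) * (deriv (fun y => φ y t) x) ^ 2 + V x t
        - (hbar ^ 2 / (2 * m))
            * (deriv (deriv (fun y => Real.sqrt (ρ y t))) x / Real.sqrt (ρ x t)) = 0)
    (Ψ : ℝ → ℝ → ℂ)
    (hΨ : ∀ x t, Ψ x t = (Real.sqrt (ρ x t) : ℂ) * Complex.exp (Complex.I * (φ x t : ℝ))) :
    ∀ x t, Complex.I * (hbar : ℂ) * deriv (fun s => Ψ x s) t
        = -((hbar : ℂ) ^ 2 / (2 * (m : ℂ))) * deriv (deriv (fun y => Ψ y t)) x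
          + (V x t : ℂ) * Ψ x t := by
  intro x t
  have hρx : ContDiff ℝ 2 fun y => ρ y t := hρ.comp (contDiff_prodMk_left t)
  have hρt : ContDiff ℝ 2 fun s => ρ x s := hρ.comp (contDiff_prodMk_right x)
  have hφx : ContDiff ℝ 2 fun y => φ y t := hφ.comp (contDiff_prodMk_left t)
  have hφt : ContDiff ℝ 2 fun s => φ x s := hφ.comp (contDiff_prodMk_right x)
  have hRx : ContDiff ℝ 2 fun y => √(ρ y t) := hρx.sqrt fun y => (hρpos y t).ne'
  have hRt : ContDiff ℝ 2 fun s => √(ρ x s) := hρt.sqrt fun s => (hρpos x s).ne'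
  have hR : 0 < √(ρ x t) := Real.sqrt_pos.mpr (hρpos x t)
  rw [show (fun s => Ψ x s) = fun s => (√(ρ x s) : ℂ) * cexp (I * (φ x s : ℂ)) from
      funext (hΨ x),
    show (fun y => Ψ y t) = fun y => (√(ρ y t) : ℂ) * cexp (I * (φ y t : ℂ)) from
      funext fun y => hΨ y t,
    deriv_ofReal_mul_cexp_I_mul (hRt.differentiable two_ne_zero t)
      (hφt.differentiable two_ne_zero t),
    deriv_deriv_ofReal_mul_cexp_I_mul (hRx.differentiable two_ne_zero)
      (hφx.differentiable two_ne_zero) (hRx.differentiable_deriv_two x)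
      (hφx.differentiable_deriv_two x), hΨ x t]
  refine schrodinger_of_madelung _ ?_ ?_
  · refine (mul_eq_zero.mp ?_).resolve_left (by positivity : 2 * √(ρ x t) ≠ 0)
    linear_combination hbar * hFP x t
      - hbar * deriv_eq_two_mul_sqrt_mul_deriv_sqrt (hρt.differentiable two_ne_zero t) (hρpos x t)
      - hbar ^ 2 / m * deriv (fun y => φ y t) x
        * deriv_eq_two_mul_sqrt_mul_deriv_sqrt (hρx.differentiable two_ne_zero x) (hρpos x t)
      - hbar ^ 2 / m * deriv (deriv fun y => φ y t) x * (Real.sq_sqrt (hρpos x t).le).symm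
  · linear_combination √(ρ x t) * hphase x t + hbar ^ 2 / (2 * m)
      * mul_div_cancel₀ (deriv (deriv fun y => √(ρ y t)) x) hR.ne'

/-- The entropic-dynamics derivation of the Schrödinger equation (one spatial
dimension, osmotic mass equal to the current mass): if the density `ρ` and phase `φ`
satisfy the continuity (Fokker–Planck) equation and the phase equation, then
`Ψ = √ρ · exp(iφ)` satisfies `ihbar ∂_t Ψ = −(hbar²/2m) ∂_x² Ψ + V Ψ`.
Functions of two variables are curried, `F x t`, with `x` the spatial and `t` the
time variable; `∂_t F (x,t) = deriv (F x) t`, `∂_x F (x,t) = deriv (fun y => F y t) x`. -/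
theorem eqd_schrodinger_equation
    (hbar m : ℝ) (hpos : 0 < hbar) (hm : 0 < m)
    (ρ φ V : ℝ → ℝ → ℝ)
    (hρpos : ∀ x t, 0 < ρ x t)
    (hρ : ContDiff ℝ 2 (Function.uncurry ρ))
    (hφ : ContDiff ℝ 2 (Function.uncurry φ))
    (hFP : ∀ x t, deriv (fun s => ρ x s) t
        = -(hbar / m) * (deriv (fun y => ρ y t) x * deriv (fun y => φ y t) x
            + ρ x t * deriv (deriv (fun y => φ y t)) x))
    (hphase : ∀ x t, hbar * deriv (fun s => φ x s) t
        + (hbar ^ 2 / (2 * m)) * (deriv (fun y => φ y t) x) ^ 2 + V x t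
        - (hbar ^ 2 / (2 * m))
            * (deriv (deriv (fun y => Real.sqrt (ρ y t))) x / Real.sqrt (ρ x t)) = 0)
    (Ψ : ℝ → ℝ → ℂ)
    (hΨ : ∀ x t, Ψ x t = (Real.sqrt (ρ x t) : ℂ) * Complex.exp (Complex.I * (φ x t : ℝ))) :
    ∀ x t, Complex.I * (hbar : ℂ) * deriv (fun s => Ψ x s) t
        = -((hbar : ℂ) ^ 2 / (2 * (m : ℂ))) * deriv (deriv (fun y => Ψ y t)) x
          + (V x t : ℂ) * Ψ x t :=
  eqd_schrodinger_equation_general hbar m ρ φ V hρpos hρ hφ hFP hphase Ψ hΨ
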